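/- Let Σ be a positive semidefinite m×m matrix and w ∈ ℝᵐ. Suppose ŵ* ∈ 𝒲 ⊆ ℝᵐ satisfies (ŵ*)ᵀΣ(ŵ* − w) = 0 and ŵ* minimizes (w − ŵ)ᵀΣ(w − ŵ) over 𝒲. Then for every even p ≥ 2, ŵ* minimizes (wᵀΣw)^p − 2(wᵀΣŵ)^p + (ŵᵀΣŵ)^p over all ŵ ∈ 𝒲 satisfying (ŵ − w)ᵀΣ(ŵ − w) ≤ wᵀΣw. -/
import Mathlib


open Matrix

lemma stmt13_symm {m : ℕ} (S : Matrix (Fin m) (Fin m) ℝ) (hS : Sᵀ = S)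
    (x y : Fin m → ℝ) : x ⬝ᵥ S.mulVec y = y ⬝ᵥ S.mulVec x := by
  rw [dotProduct_mulVec, ← mulVec_transpose, hS, dotProduct_comm]

lemma stmt13_convex (p : ℕ) (hp : Even p) (a b : ℝ) :
    2 * (a + b) ^ p ≤ a ^ p + (a + 2 * b) ^ p := by
  have hc := (Even.convexOn_pow hp).2 (Set.mem_univ a) (Set.mem_univ (a + 2 * b))
    (by norm_num : (0:ℝ) ≤ 1/2) (by norm_num : (0:ℝ) ≤ 1/2) (by norm_num)
  simp only [smul_eq_mul] at hc
  have h1 : (1/2 : ℝ) * a + 1/2 * (a + 2 * b) = a + b := by ring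
  rw [h1] at hc
  linarith

/-- Let `Σ` be a positive semidefinite `m×m` real matrix and `w ∈ ℝᵐ`.
If `ŵ* ∈ 𝒲` satisfies `(ŵ*)ᵀΣ(ŵ* − w) = 0` and minimizes `(w − ŵ)ᵀΣ(w − ŵ)` over `𝒲`,
then for every even `p ≥ 2`, `ŵ*` minimizes
`(wᵀΣw)^p − 2(wᵀΣŵ)^p + (ŵᵀΣŵ)^p` over all `ŵ ∈ 𝒲` with `(ŵ − w)ᵀΣ(ŵ − w) ≤ wᵀΣw`. -/
theorem stmt13 {m : ℕ} (S : Matrix (Fin m) (Fin m) ℝ) (hS : S.PosSemidef)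
    (w : Fin m → ℝ) (W : Set (Fin m → ℝ)) (wstar : Fin m → ℝ) (hmem : wstar ∈ W)
    (horth : wstar ⬝ᵥ S.mulVec (wstar - w) = 0)
    (hmin : ∀ what ∈ W,
      (w - wstar) ⬝ᵥ S.mulVec (w - wstar) ≤ (w - what) ⬝ᵥ S.mulVec (w - what))
    (p : ℕ) (hp : Even p) (hp2 : 2 ≤ p) :
    ∀ what ∈ W, (what - w) ⬝ᵥ S.mulVec (what - w) ≤ w ⬝ᵥ S.mulVec w →
      (w ⬝ᵥ S.mulVec w) ^ p - 2 * (w ⬝ᵥ S.mulVec wstar) ^ p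
          + (wstar ⬝ᵥ S.mulVec wstar) ^ p
        ≤ (w ⬝ᵥ S.mulVec w) ^ p - 2 * (w ⬝ᵥ S.mulVec what) ^ p
          + (what ⬝ᵥ S.mulVec what) ^ p := by
  intro what hW hC
  have hSt : Sᵀ = S := hS.1
  set A := w ⬝ᵥ S.mulVec w with hA
  set s := w ⬝ᵥ S.mulVec wstar with hs
  set t := w ⬝ᵥ S.mulVec what with ht
  set u := what ⬝ᵥ S.mulVec what with hu
  set v := wstar ⬝ᵥ S.mulVec wstar with hv
  -- expand horth : v = s
  have hvs : v = s := by
    have h1 : wstar ⬝ᵥ S.mulVec w = s := stmt13_symm S hSt wstar w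
    have h2 := horth
    simp only [mulVec_sub, dotProduct_sub] at h2
    rw [← hv] at h2; linarith
  -- C* = A - s
  have hCs : (w - wstar) ⬝ᵥ S.mulVec (w - wstar) = A - s := by
    simp only [mulVec_sub, dotProduct_sub, sub_dotProduct]
    have h1 : wstar ⬝ᵥ S.mulVec w = s := stmt13_symm S hSt wstar w
    rw [← hA, ← hs, ← hv] at *
    rw [h1, hvs]; ring
  -- C = A - 2t + u
  have hCval : (what - w) ⬝ᵥ S.mulVec (what - w) = A - 2 * t + u := by
    simp only [mulVec_sub, dotProduct_sub, sub_dotProduct]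
    have h1 : what ⬝ᵥ S.mulVec w = t := stmt13_symm S hSt what w
    rw [← hA, ← ht, ← hu] at *
    rw [h1]; ring
  have hmin' := hmin what hW
  have hCwhat : (w - what) ⬝ᵥ S.mulVec (w - what) = A - 2 * t + u := by
    rw [← hCval]
    have : w - what = -(what - w) := by abel
    rw [this, mulVec_neg, dotProduct_neg, neg_dotProduct, neg_neg]
  rw [hCs, hCwhat] at hmin'
  rw [hCval] at hC
  -- let a = 2t - u (= A - C), b = u - t
  have key : 2 * t ^ p ≤ (2 * t - u) ^ p + u ^ p := by
    have := stmt13_convex p hp (2 * t - u) (u - t)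
    have e1 : 2 * t - u + (u - t) = t := by ring
    have e2 : 2 * t - u + 2 * (u - t) = u := by ring
    rw [e1, e2] at this; exact this
  have ha : 0 ≤ 2 * t - u := by linarith
  have has : 2 * t - u ≤ s := by linarith
  have hpow : (2 * t - u) ^ p ≤ s ^ p := pow_le_pow_left₀ ha has p
  rw [hvs]
  linarith
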